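/- arXiv:2002.03670 — 5 statements merged into one kernel-verified Lean document; each statement's English description precedes it below -/
import Mathlib

section
/- Let G be a finite weighted tree on vertex set V and let v ∈ V. Then the reduced Laplacian L_v(G), obtained from the weighted Laplacian L(G) by deleting the row and column indexed by v, is invertible, and for all vertices i, j ≠ v the (i,j) entry of L_v(G)⁻¹ equals Σ_{e ∈ P_{i,j}} 1/w_e, where P_{i,j} is the set of edges lying both on the unique path from i to v and on the unique path from j to v. -/
open Finset Matrix

def weightedLaplacian {V : Type*} [Fintype V] [DecidableEq V]
    (G : SimpleGraph V) [DecidableRel G.Adj] (w : V → V → ℝ) : Matrix V V ℝ :=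
  Matrix.of fun i j =>
    if i = j then ∑ k ∈ Finset.univ.filter (G.Adj i ·), w i k
    else if G.Adj i j then - w i j else 0

/-!
Root the tree at `v` and let `E x` be the set of edges on the path from `x` to `v`. The candidate
inverse is `M i j = ∑_{e ∈ E i ∩ E j} 1 / w_e`. Fix `k` and put `g x = M x k`, so `g v = 0`.
Along an edge `iu` the function `g` jumps by `± 1 / w_{iu}` if `iu` lies on the path from `k` to
`v`, and not at all otherwise; the sign is `+` when `u` is the parent of `i`. Hence
`(L g) i = ∑_u w_{iu} (g i - g u)` is the number of path edges from `i` to its parent minus the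
number of path edges from `i` to its children, which is `1 - 1` at inner vertices of the path,
`1 - 0` at `k` and `0` off the path. So `L_v M = 1`.
-/

namespace SimpleGraph

variable {V : Type*} {G : SimpleGraph V}

lemma Walk.IsPath.card_filter_mem_edges [DecidableEq V] {k v : V} {p : G.Walk k v}
    (hp : p.IsPath) {i : V} (hiv : i ≠ v) :
    #{e ∈ p.edges.toFinset | i ∈ e} = if i ∈ p.support then (if i = k then 1 else 2) else 0 := by
  induction p with
  | nil => simp [hiv]
  | @cons k c _ h q ih =>
    have hk : k ∉ q.support := ((Walk.cons_isPath_iff h q).mp hp).2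
    have hnew : s(k, c) ∉ {e ∈ q.edges.toFinset | i ∈ e} := fun he =>
      hk (q.fst_mem_support_of_mem_edges (List.mem_toFinset.mp (mem_filter.mp he).1))
    have hq := ih hp.of_cons hiv
    rw [Walk.edges_cons, List.toFinset_cons, filter_insert]
    by_cases hik : i = k
    · subst hik
      rw [if_pos (Sym2.mem_mk_left _ _), card_insert_of_notMem hnew, hq]
      simp [hk]
    by_cases hic : i = c
    · subst hic
      rw [if_pos (Sym2.mem_mk_right _ _), card_insert_of_notMem hnew, hq]
      simp [hik]
    · rw [if_neg (by simp [hik, hic]), hq]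
      simp [hik, hic]

lemma card_filter_adj_mk_mem [Fintype V] [DecidableEq V] [DecidableRel G.Adj] (i : V)
    {S : Finset (Sym2 V)} (hS : ∀ e ∈ S, e ∈ G.edgeSet) :
    #{u ∈ univ.filter (G.Adj i ·) | s(i, u) ∈ S} = #{e ∈ S | i ∈ e} := by
  refine card_nbij (fun u => s(i, u)) (fun u hu => ?_)
    (fun a _ b _ hab => Sym2.congr_right.mp hab) (fun e he => ?_)
  · simp only [coe_filter, mem_filter, mem_univ, true_and, Set.mem_ofPred_eq] at hu ⊢
    exact ⟨hu.2, Sym2.mem_mk_left i u⟩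
  · rw [coe_filter] at he
    obtain ⟨u, rfl⟩ := Sym2.mem_iff_exists.mp he.2
    exact ⟨u, by simpa using ⟨hS _ he.1, he.1⟩, rfl⟩

end SimpleGraph

lemma weightedLaplacian_mulVec_apply {V : Type*} [Fintype V] [DecidableEq V]
    (G : SimpleGraph V) [DecidableRel G.Adj] (w : V → V → ℝ) (g : V → ℝ) (i : V) :
    (weightedLaplacian G w *ᵥ g) i = ∑ u ∈ univ.filter (G.Adj i ·), w i u * (g i - g u) := by
  have hL : ∀ x, weightedLaplacian G w i x =
      (if i = x then ∑ u ∈ univ.filter (G.Adj i ·), w i u else 0) -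
        if G.Adj i x then w i x else 0 := by
    intro x
    by_cases hx : i = x
    · subst hx
      simp [weightedLaplacian]
    · simp only [weightedLaplacian, of_apply, if_neg hx]
      split_ifs <;> simp
  simp only [mulVec, dotProduct, hL, sub_mul, ite_mul, zero_mul, sum_sub_distrib, sum_ite_eq,
    mem_univ, if_true, ← sum_filter, sum_mul, mul_sub]

namespace SimpleGraph.IsTree

variable {V : Type*} {G : SimpleGraph V} (hG : G.IsTree) (v : V)

noncomputable def rootPath (i : V) : G.Walk i v :=
  (hG.existsUnique_path i v).choose

lemma isPath_rootPath (i : V) : (hG.rootPath v i).IsPath :=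
  (hG.existsUnique_path i v).choose_spec.1

variable {v} in
lemma eq_rootPath {i : V} {p : G.Walk i v} (hp : p.IsPath) : p = hG.rootPath v i :=
  (hG.existsUnique_path i v).choose_spec.2 p hp

lemma rootPath_root : hG.rootPath v v = Walk.nil :=
  (hG.eq_rootPath Walk.IsPath.nil).symm

variable {v}

lemma rootPath_eq_cons_of_notMem {i u : V} (h : G.Adj i u)
    (hi : i ∉ (hG.rootPath v u).support) :
    hG.rootPath v i = Walk.cons h (hG.rootPath v u) :=
  (hG.eq_rootPath ((Walk.cons_isPath_iff h _).mpr ⟨hG.isPath_rootPath v u, hi⟩)).symm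

variable [DecidableEq V]

lemma rootPath_eq_cons_of_mem {i u : V} (h : G.Adj i u)
    (hi : i ∈ (hG.rootPath v u).support) :
    hG.rootPath v u = Walk.cons h.symm (hG.rootPath v i) := by
  have hpath := hG.isPath_rootPath v u
  have hedge : (Walk.cons h.symm Walk.nil : G.Walk u i).IsPath := by
    simpa using h.ne'
  -- the only path between adjacent vertices of a tree is the edge joining them
  have htake : (hG.rootPath v u).takeUntil i hi = Walk.cons h.symm Walk.nil :=
    (hG.existsUnique_path u i).unique (hpath.takeUntil hi) hedge
  rw [← Walk.take_spec _ hi, htake, hG.eq_rootPath (hpath.dropUntil hi)]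
  rfl

variable (v) in
noncomputable def rootPathEdges (i : V) : Finset (Sym2 V) :=
  (hG.rootPath v i).edges.toFinset

variable (v) in
lemma rootPathEdges_root : hG.rootPathEdges v v = ∅ := by
  simp [rootPathEdges, rootPath_root]

lemma rootPathEdges_eq_insert {i u : V} {h : G.Adj i u}
    (hcons : hG.rootPath v i = Walk.cons h (hG.rootPath v u)) :
    hG.rootPathEdges v i = insert s(i, u) (hG.rootPathEdges v u) ∧
      s(i, u) ∉ hG.rootPathEdges v u := by
  have hi : i ∉ (hG.rootPath v u).support := by
    have := hG.isPath_rootPath v i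
    rw [hcons, Walk.cons_isPath_iff] at this
    exact this.2
  refine ⟨by simp [rootPathEdges, hcons], fun he => hi ?_⟩
  exact Walk.fst_mem_support_of_mem_edges _ (List.mem_toFinset.mp he)

variable (v) in
lemma rootPathEdges_adj_cases {i u : V} (h : G.Adj i u) :
    (hG.rootPathEdges v i = insert s(i, u) (hG.rootPathEdges v u) ∧
        s(i, u) ∉ hG.rootPathEdges v u) ∨
      (hG.rootPathEdges v u = insert s(i, u) (hG.rootPathEdges v i) ∧
        s(i, u) ∉ hG.rootPathEdges v i) := by
  by_cases hi : i ∈ (hG.rootPath v u).support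
  · right
    rw [Sym2.eq_swap]
    exact hG.rootPathEdges_eq_insert (hG.rootPath_eq_cons_of_mem h hi)
  · exact .inl (hG.rootPathEdges_eq_insert (hG.rootPath_eq_cons_of_notMem h hi))

lemma rootPathEdges_subset_of_mem_support {i k : V} (hi : i ∈ (hG.rootPath v k).support) :
    hG.rootPathEdges v i ⊆ hG.rootPathEdges v k := by
  intro e he
  rw [rootPathEdges, ← hG.eq_rootPath ((hG.isPath_rootPath v k).dropUntil hi),
    List.mem_toFinset] at he
  exact List.mem_toFinset.mpr (Walk.edges_dropUntil_subset_edges _ hi he)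

variable (v) in
lemma rootPathEdges_subset_edgeSet (k : V) : ∀ e ∈ hG.rootPathEdges v k, e ∈ G.edgeSet :=
  fun _ he => (hG.rootPath v k).edges_subset_edgeSet (List.mem_toFinset.mp he)

variable (v) in
lemma sum_rootPathEdges_sub_of_adj {R : Type*} [Ring R] (F : Sym2 V → R) {i u : V}
    (h : G.Adj i u) :
    ∑ e ∈ hG.rootPathEdges v i, F e - ∑ e ∈ hG.rootPathEdges v u, F e =
      ((if s(i, u) ∈ hG.rootPathEdges v i then 1 else 0) -
        (if s(i, u) ∈ hG.rootPathEdges v u then 1 else 0)) * F s(i, u) := by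
  rcases hG.rootPathEdges_adj_cases v h with ⟨hi, hu⟩ | ⟨hu, hi⟩
  · rw [hi, sum_insert hu]
    simp [hu]
  · rw [hu, sum_insert hi]
    simp [hi]

lemma card_filter_mem_rootPathEdges {i : V} (hi : i ≠ v) (k : V) :
    #{e ∈ hG.rootPathEdges v k | i ∈ e} =
      if i ∈ (hG.rootPath v k).support then (if i = k then 1 else 2) else 0 :=
  (hG.isPath_rootPath v k).card_filter_mem_edges hi

lemma card_filter_mem_rootPathEdges_inter {i : V} (hi : i ≠ v) (k : V) :
    #{e ∈ hG.rootPathEdges v k ∩ hG.rootPathEdges v i | i ∈ e} =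
      if i ∈ (hG.rootPath v k).support then 1 else 0 := by
  by_cases hik : i ∈ (hG.rootPath v k).support
  · rw [if_pos hik, inter_eq_right.mpr (hG.rootPathEdges_subset_of_mem_support hik)]
    simpa using hG.card_filter_mem_rootPathEdges hi i
  · rw [if_neg hik, ← Nat.le_zero]
    have hcount := hG.card_filter_mem_rootPathEdges hi k
    rw [if_neg hik] at hcount
    exact hcount ▸ card_le_card (filter_subset_filter _ inter_subset_left)

variable [Fintype V] [DecidableRel G.Adj]

lemma sum_adj_indicator_mul_sign {R : Type*} [Ring R] {i : V} (hi : i ≠ v) (k : V) :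
    ∑ u ∈ univ.filter (G.Adj i ·),
      (if s(i, u) ∈ hG.rootPathEdges v k then (1 : R) else 0) *
        ((if s(i, u) ∈ hG.rootPathEdges v i then 1 else 0) -
          (if s(i, u) ∈ hG.rootPathEdges v u then 1 else 0)) =
      if i = k then 1 else 0 := by
  have hterm : ∀ u ∈ univ.filter (G.Adj i ·),
      (if s(i, u) ∈ hG.rootPathEdges v k then (1 : R) else 0) *
        ((if s(i, u) ∈ hG.rootPathEdges v i then 1 else 0) -
          (if s(i, u) ∈ hG.rootPathEdges v u then 1 else 0)) =
      2 * (if s(i, u) ∈ hG.rootPathEdges v k ∩ hG.rootPathEdges v i then 1 else 0) -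
        if s(i, u) ∈ hG.rootPathEdges v k then 1 else 0 := by
    intro u hu
    rcases hG.rootPathEdges_adj_cases v (mem_filter.mp hu).2 with ⟨hi, hu⟩ | ⟨hu, hi⟩
    · have hmem : s(i, u) ∈ hG.rootPathEdges v i := hi ▸ mem_insert_self _ _
      split_ifs <;> simp_all
      norm_num
    · have hmem : s(i, u) ∈ hG.rootPathEdges v u := hu ▸ mem_insert_self _ _
      split_ifs <;> simp_all
  rw [sum_congr rfl hterm, sum_sub_distrib, ← mul_sum, sum_boole, sum_boole,
    card_filter_adj_mk_mem i
      (fun e he => hG.rootPathEdges_subset_edgeSet v k e (mem_inter.mp he).1),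
    card_filter_adj_mk_mem i (hG.rootPathEdges_subset_edgeSet v k),
    hG.card_filter_mem_rootPathEdges_inter hi, hG.card_filter_mem_rootPathEdges hi k]
  by_cases hik : i = k
  · subst hik
    simp only [Walk.start_mem_support, if_true]
    norm_num
  · split_ifs <;> norm_num

variable (v) in
noncomputable def sharedEdgeMatrix (f : Sym2 V → ℝ) : Matrix {u // u ≠ v} {u // u ≠ v} ℝ :=
  of fun i j => ∑ e ∈ hG.rootPathEdges v i ∩ hG.rootPathEdges v j, f e

variable (v) in
lemma weightedLaplacian_submatrix_mul_sharedEdgeMatrix {w : V → V → ℝ} {f : Sym2 V → ℝ}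
    (hf : ∀ a b, G.Adj a b → w a b * f s(a, b) = 1) :
    (weightedLaplacian G w).submatrix (fun i : {u // u ≠ v} => (i : V))
        (fun j : {u // u ≠ v} => (j : V)) *
      hG.sharedEdgeMatrix v f = 1 := by
  ext ⟨i, hi⟩ ⟨k, hk⟩
  set g : V → ℝ := fun x => ∑ e ∈ hG.rootPathEdges v x ∩ hG.rootPathEdges v k, f e
  have hg : ∀ x, g x = ∑ e ∈ hG.rootPathEdges v x, if e ∈ hG.rootPathEdges v k then f e else 0 :=
    fun x => (sum_ite_mem _ _ _).symm
  have hgv : g v = 0 := by simp [g, rootPathEdges_root]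
  calc _ = ∑ j : {u // u ≠ v}, weightedLaplacian G w i j * g j := rfl
    _ = (weightedLaplacian G w *ᵥ g) i := by
        rw [← subtype_univ, sum_subtype_eq_sum_filter (fun x => weightedLaplacian G w i x * g x)]
        exact sum_filter_of_ne fun x _ hx hxv => hx (by rw [hxv, hgv, mul_zero])
    _ = ∑ u ∈ univ.filter (G.Adj i ·), w i u * (g i - g u) := weightedLaplacian_mulVec_apply ..
    _ = ∑ u ∈ univ.filter (G.Adj i ·),
          (if s(i, u) ∈ hG.rootPathEdges v k then (1 : ℝ) else 0) *
            ((if s(i, u) ∈ hG.rootPathEdges v i then 1 else 0) -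
              (if s(i, u) ∈ hG.rootPathEdges v u then 1 else 0)) := by
        refine sum_congr rfl fun u hu => ?_
        rw [hg, hg, hG.sum_rootPathEdges_sub_of_adj v _ (mem_filter.mp hu).2, mul_left_comm,
          apply_ite (w i u * ·), hf _ _ (mem_filter.mp hu).2, mul_zero, mul_comm]
    _ = if i = k then 1 else 0 := hG.sum_adj_indicator_mul_sign hi k
    _ = (1 : Matrix {u // u ≠ v} {u // u ≠ v} ℝ) ⟨i, hi⟩ ⟨k, hk⟩ := by
        simp only [one_apply, Subtype.mk.injEq]

end SimpleGraph.IsTree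

/-- for a finite weighted tree `G` and a vertex `v`, the reduced Laplacian
`L_v(G)` (the Laplacian with the row and column of `v` deleted) is invertible, and the
`(i,j)` entry of its inverse equals `∑_{e ∈ P_{i,j}} 1/w_e`, where `P_{i,j}` is the set
of edges lying on both the (unique) path from `i` to `v` and the (unique) path from `j`
to `v`. -/
theorem reduced_laplacian_inverse_entries
    {V : Type*} [Fintype V] [DecidableEq V]
    (G : SimpleGraph V) [DecidableRel G.Adj] (htree : G.IsTree)
    (w : V → V → ℝ) (hw : ∀ i j, w i j = w j i)
    (hpos : ∀ i j, G.Adj i j → 0 < w i j)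
    (v : V) :
    IsUnit ((weightedLaplacian G w).submatrix
        (fun i : {u : V // u ≠ v} => (i : V)) (fun j : {u : V // u ≠ v} => (j : V))) ∧
    ∀ (i j : {u : V // u ≠ v}) (p : G.Walk (i : V) v) (q : G.Walk (j : V) v),
      p.IsPath → q.IsPath →
      ((weightedLaplacian G w).submatrix
          (fun i : {u : V // u ≠ v} => (i : V)) (fun j : {u : V // u ≠ v} => (j : V)))⁻¹ i j =
        ∑ e ∈ p.edges.toFinset ∩ q.edges.toFinset,
          Sym2.lift ⟨fun a b => 1 / w a b,
            fun a b => by dsimp only; rw [hw a b]⟩ e := by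
  set f : Sym2 V → ℝ := Sym2.lift ⟨fun a b => 1 / w a b, fun a b => by dsimp only; rw [hw a b]⟩
  have hf : ∀ a b, G.Adj a b → w a b * f s(a, b) = 1 := fun a b hab =>
    mul_one_div_cancel (hpos a b hab).ne'
  have hinv := htree.weightedLaplacian_submatrix_mul_sharedEdgeMatrix v hf
  refine ⟨.of_mul_eq_one _ hinv, fun i j p q hp hq => ?_⟩
  rw [inv_eq_right_inv hinv, htree.eq_rootPath hp, htree.eq_rootPath hq]
  rfl
end

section
/- Let G be a finite weighted tree with at least three leaves in which every non-leaf vertex has degree at least three, and let v_1, …, v_k (k ≥ 3) be an enumeration of its leaves. Then for distinct indices i₁, i₂ the leaves v_{i₁} and v_{i₂} are adjacent to a common vertex if and only if there exists a constant c ∈ ℝ such that d_G(v_{i₁}, v_j) − d_G(v_{i₂}, v_j) = c for every index j ∈ {1,…,k} \ {i₁, i₂}. -/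
/-!
If the leaves `x₁, x₂` share the neighbour `u`, every path from either of them to another leaf `y`
passes through `u`, so `d(x₁, y) - d(x₂, y) = d(x₁, u) - d(x₂, u)`. Conversely, suppose their
neighbours `u₁ ≠ u₂`. With at least three vertices the neighbour of a leaf is not a leaf, so
`u₁` has degree at least three and hence a branch avoiding both `x₁` and the path towards `u₂`.
Following it to a leaf `y` (in a finite acyclic graph a path keeps extending through a neighbour
other than the previous vertex until it ends at a leaf) gives a leaf whose path from `u₂` runs
through `u₁`, for which the difference is `d(x₁, u₁) - d(x₂, u₂) - d(u₂, u₁)`. The symmetric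
construction gives a leaf with difference `d(x₁, u₁) - d(x₂, u₂) + d(u₁, u₂)`, and the two differ
by the positive amount `d(u₁, u₂) + d(u₂, u₁)`.
-/

namespace SimpleGraph

variable {V : Type*} {G : SimpleGraph V}

noncomputable def Walk.weightedLength (w : V → V → ℝ) {a b : V} (p : G.Walk a b) : ℝ :=
  (p.darts.map fun dd => 1 / w dd.toProd.1 dd.toProd.2).sum

@[simp]
lemma Walk.weightedLength_append (w : V → V → ℝ) {a b c : V} (p : G.Walk a b)
    (q : G.Walk b c) : (p.append q).weightedLength w = p.weightedLength w + q.weightedLength w := by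
  simp [weightedLength, darts_append]

lemma Walk.weightedLength_pos {w : V → V → ℝ} (hpos : ∀ a b, G.Adj a b → 0 < w a b) {a b : V}
    {p : G.Walk a b} (hp : ¬ p.Nil) : 0 < p.weightedLength w := by
  refine List.sum_pos _ (fun x hx => ?_) (by simpa [darts_eq_nil] using hp)
  obtain ⟨dd, -, rfl⟩ := List.mem_map.mp hx
  exact one_div_pos.mpr (hpos _ _ dd.adj)

def IsPathDist (G : SimpleGraph V) (w d : V → V → ℝ) : Prop :=
  ∀ (a b : V) (p : G.Walk a b), p.IsPath → d a b = p.weightedLength w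

lemma mem_support_of_adj_of_degree_eq_one {x u y : V} [Fintype (G.neighborSet x)]
    (hx : G.degree x = 1) (hxu : G.Adj x u) (p : G.Walk x y) (hxy : x ≠ y) : u ∈ p.support := by
  obtain ⟨u', -, huniq⟩ := degree_eq_one_iff_existsUnique_adj.mp hx
  have hsnd : p.snd = u := (huniq _ (p.adj_snd (Walk.not_nil_of_ne hxy))).trans (huniq u hxu).symm
  exact hsnd ▸ p.getVert_mem_support 1

namespace IsPathDist

variable {w d : V → V → ℝ} (hd : G.IsPathDist w d)
include hd

lemma dist_pos (hpos : ∀ a b, G.Adj a b → 0 < w a b) {a b : V} (hab : G.Reachable a b)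
    (hne : a ≠ b) : 0 < d a b := by
  classical
  obtain ⟨p⟩ := hab
  rw [hd a b p.toPath p.toPath.2]
  exact Walk.weightedLength_pos hpos (Walk.not_nil_of_ne hne)

lemma dist_eq_add_of_mem_support {a b c : V} {p : G.Walk a b} (hp : p.IsPath)
    (hc : c ∈ p.support) : d a b = d a c + d c b := by
  classical
  rw [hd a b p hp, hd a c _ (hp.takeUntil hc), hd c b _ (hp.dropUntil hc),
    ← Walk.weightedLength_append, p.take_spec hc]

lemma dist_eq_add_of_degree_eq_one {x u y : V} [Fintype (G.neighborSet x)]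
    (hreach : G.Reachable x y) (hx : G.degree x = 1) (hxu : G.Adj x u) (hxy : x ≠ y) :
    d x y = d x u + d u y := by
  classical
  obtain ⟨p⟩ := hreach
  exact hd.dist_eq_add_of_mem_support p.toPath.2
    (mem_support_of_adj_of_degree_eq_one hx hxu _ hxy)

end IsPathDist

lemma IsAcyclic.isPath_concat (hG : G.IsAcyclic) {a b t : V} {p : G.Walk a b} (hp : p.IsPath)
    (h : G.Adj b t) (ht : t ≠ p.penultimate) : (p.concat h).IsPath :=
  hp.concat (fun hmem => ht (hG.eq_penultimate_of_adj_end hp h hmem)) h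

lemma IsAcyclic.support_eq_of_adj (hG : G.IsAcyclic) {a b : V} {p : G.Walk a b} (hp : p.IsPath)
    (h : G.Adj a b) : p.support = [a, b] := by
  have := hG.subsingleton_path a b |>.elim ⟨p, hp⟩ (Path.singleton h)
  simp [Subtype.mk.inj this]

lemma card_le_two_of_adj_of_degree_eq_one [Fintype V] [DecidableRel G.Adj] (hG : G.Connected)
    {x u : V} (hx : G.degree x = 1) (hu : G.degree u = 1) (hxu : G.Adj x u) :
    Fintype.card V ≤ 2 := by
  classical
  have hclosed : ∀ {a b : V} (p : G.Walk a b), (a = x ∨ a = u) → b = x ∨ b = u := by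
    intro a b p
    induction p with
    | nil => exact id
    | cons h p ih =>
      rintro (rfl | rfl)
      · exact ih (Or.inr ((degree_eq_one_iff_existsUnique_adj.mp hx).unique h hxu))
      · exact ih (Or.inl ((degree_eq_one_iff_existsUnique_adj.mp hu).unique h hxu.symm))
  calc Fintype.card V = (Finset.univ : Finset V).card := rfl
    _ ≤ ({x, u} : Finset V).card := Finset.card_le_card fun z _ => by
        simpa using hclosed (hG.preconnected x z).some (Or.inl rfl)
    _ ≤ 2 := Finset.card_le_two

lemma three_le_degree_of_adj_of_degree_eq_one [Fintype V] [DecidableRel G.Adj]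
    (hG : G.Connected) (hcard : 3 ≤ Fintype.card V) (hdeg : ∀ u, G.degree u ≠ 1 → 3 ≤ G.degree u)
    {x u : V} (hx : G.degree x = 1) (hxu : G.Adj x u) : 3 ≤ G.degree u :=
  hdeg u fun hu => by
    have := card_le_two_of_adj_of_degree_eq_one hG hx hu hxu
    omega

variable [Fintype V] [DecidableRel G.Adj]

theorem IsAcyclic.exists_isPath_append_degree_eq_one (hG : G.IsAcyclic) {a b : V}
    (p : G.Walk a b) (hp : p.IsPath) (hne : ¬ p.Nil) :
    ∃ (y : V) (r : G.Walk b y), G.degree y = 1 ∧ (p.append r).IsPath := by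
  by_cases hb : G.degree b = 1
  · exact ⟨b, .nil, hb, by simpa⟩
  have hb2 : 1 < (G.neighborFinset b).card := by
    have : 0 < G.degree b := G.degree_pos_iff_exists_adj b |>.mpr ⟨_, (p.adj_penultimate hne).symm⟩
    rw [card_neighborFinset_eq_degree]
    omega
  obtain ⟨t, ht, htp⟩ := Finset.exists_mem_ne hb2 p.penultimate
  have hbt : G.Adj b t := (mem_neighborFinset _ _ _).mp ht
  obtain ⟨y, r, hy, hr⟩ := hG.exists_isPath_append_degree_eq_one (p.concat hbt)
    (hG.isPath_concat hp hbt htp) (by simp [Walk.concat_eq_append])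
  exact ⟨y, .cons hbt r, hy, by rwa [← Walk.concat_append]⟩
termination_by Fintype.card V - p.length
decreasing_by
  have := hp.length_lt
  simp only [Walk.length_concat]
  omega

theorem IsAcyclic.exists_isPath_append_degree_eq_one_of_three_le_degree (hG : G.IsAcyclic)
    {u' u x : V} (q : G.Walk u' u) (hq : q.IsPath) (hu : 3 ≤ G.degree u) (hux : G.Adj u x) :
    ∃ (y : V) (r : G.Walk u y), G.degree y = 1 ∧ y ≠ x ∧ (q.append r).IsPath := by
  classical
  obtain ⟨z, hz, hzq⟩ := Finset.exists_mem_ne (s := (G.neighborFinset u).erase x)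
    (by rw [Finset.card_erase_of_mem (by simpa using hux), card_neighborFinset_eq_degree]; omega)
    q.penultimate
  obtain ⟨hzx, hz⟩ := Finset.mem_erase.mp hz
  have huz : G.Adj u z := (mem_neighborFinset _ _ _).mp hz
  obtain ⟨y, r, hy, hr⟩ := hG.exists_isPath_append_degree_eq_one _ (hG.isPath_concat hq huz hzq)
    (by simp [Walk.concat_eq_append])
  rw [Walk.concat_append] at hr
  refine ⟨y, .cons huz r, hy, ?_, hr⟩
  rintro rfl
  have hxz : y = z := by
    simpa using hG.eq_snd_of_adj_start hr.of_append_right hux (Walk.end_mem_support _)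
  exact hzx hxz.symm

theorem IsPathDist.exists_degree_eq_one_dist_eq_add {w d : V → V → ℝ} (hd : G.IsPathDist w d)
    (hG : G.IsTree) {x₁ u₁ x₂ u₂ : V} (h₁ : G.Adj x₁ u₁) (h₂ : G.Adj x₂ u₂)
    (hu₁ : 3 ≤ G.degree u₁) (hx₂ : G.degree x₂ = 1) (hne : u₁ ≠ u₂) :
    ∃ y, G.degree y = 1 ∧ y ≠ x₁ ∧ y ≠ x₂ ∧ d u₂ y = d u₂ u₁ + d u₁ y := by
  classical
  obtain ⟨q, hq, -⟩ := hG.existsUnique_path u₂ u₁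
  obtain ⟨y, r, hy, hyx₁, hP⟩ :=
    hG.isAcyclic.exists_isPath_append_degree_eq_one_of_three_le_degree q hq hu₁ h₁.symm
  have hu₁P : u₁ ∈ (q.append r).support := by simp [Walk.mem_support_append_iff]
  refine ⟨y, hy, hyx₁, ?_, hd.dist_eq_add_of_mem_support hP hu₁P⟩
  rintro rfl
  rw [hG.isAcyclic.support_eq_of_adj hP h₂.symm] at hu₁P
  rcases List.mem_pair.mp hu₁P with rfl | rfl
  · exact hne rfl
  · omega

end SimpleGraph

open SimpleGraph

theorem leaves_common_neighbor_iff_distance_difference_constant_general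
    {V : Type*} [Fintype V]
    (G : SimpleGraph V) [DecidableRel G.Adj] (htree : G.IsTree)
    (w : V → V → ℝ)
    (hpos : ∀ a b, G.Adj a b → 0 < w a b)
    (k : ℕ) (hk : 3 ≤ k) (v : Fin k → V) (hinj : Function.Injective v)
    (hrange : Set.range v = {u : V | G.degree u = 1})
    (hdeg : ∀ u : V, G.degree u ≠ 1 → 3 ≤ G.degree u)
    (d : V → V → ℝ)
    (hd : ∀ (a b : V) (p : G.Walk a b), p.IsPath →
      d a b = (p.darts.map fun dd => 1 / w dd.toProd.1 dd.toProd.2).sum)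
    (i₁ i₂ : Fin k) :
    (∃ c : V, G.Adj (v i₁) c ∧ G.Adj (v i₂) c) ↔
      (∃ c : ℝ, ∀ j : Fin k, j ≠ i₁ → j ≠ i₂ →
        d (v i₁) (v j) - d (v i₂) (v j) = c) := by
  have hd : G.IsPathDist w d := hd
  have hleaf : ∀ y, G.degree y = 1 ↔ ∃ j, v j = y := fun y => by
    simpa using (Set.ext_iff.mp hrange y).symm
  have hv (i : Fin k) : G.degree (v i) = 1 := (hleaf _).mpr ⟨i, rfl⟩
  have hreach := htree.connected.preconnected
  have hdist (i : Fin k) {u y : V} (h : G.Adj (v i) u) (hy : y ≠ v i) :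
      d (v i) y = d (v i) u + d u y :=
    hd.dist_eq_add_of_degree_eq_one (hreach _ _) (hv i) h hy.symm
  constructor
  · rintro ⟨u, hu₁, hu₂⟩
    refine ⟨d (v i₁) u - d (v i₂) u, fun j hj₁ hj₂ => ?_⟩
    rw [hdist i₁ hu₁ (hinj.ne hj₁), hdist i₂ hu₂ (hinj.ne hj₂)]
    ring
  rintro ⟨c, hc⟩
  obtain ⟨u₁, h₁⟩ := (degree_eq_one_iff_existsUnique_adj.mp (hv i₁)).exists
  obtain ⟨u₂, h₂⟩ := (degree_eq_one_iff_existsUnique_adj.mp (hv i₂)).exists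
  have hcard : 3 ≤ Fintype.card V := hk.trans (by simpa using Fintype.card_le_of_injective v hinj)
  have hnbr (i : Fin k) {u : V} (h : G.Adj (v i) u) : 3 ≤ G.degree u :=
    three_le_degree_of_adj_of_degree_eq_one htree.connected hcard hdeg (hv i) h
  refine ⟨u₁, h₁, ?_⟩
  by_contra h₂₁
  have hne : u₁ ≠ u₂ := fun h => h₂₁ (h ▸ h₂)
  obtain ⟨y, hy, hy₁, hy₂, hdy⟩ :=
    hd.exists_degree_eq_one_dist_eq_add htree h₁ h₂ (hnbr i₁ h₁) (hv i₂) hne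
  obtain ⟨y', hy', hy₂', hy₁', hdy'⟩ :=
    hd.exists_degree_eq_one_dist_eq_add htree h₂ h₁ (hnbr i₂ h₂) (hv i₁) hne.symm
  obtain ⟨j, rfl⟩ := (hleaf y).mp hy
  obtain ⟨j', rfl⟩ := (hleaf y').mp hy'
  have hc₁ := hc j (ne_of_apply_ne v hy₁) (ne_of_apply_ne v hy₂)
  have hc₂ := hc j' (ne_of_apply_ne v hy₁') (ne_of_apply_ne v hy₂')
  rw [hdist i₁ h₁ hy₁, hdist i₂ h₂ hy₂, hdy] at hc₁
  rw [hdist i₁ h₁ hy₁', hdist i₂ h₂ hy₂', hdy'] at hc₂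
  linarith [hd.dist_pos hpos (hreach u₁ u₂) hne, hd.dist_pos hpos (hreach u₂ u₁) hne.symm]

/-- in a finite weighted tree with at least three leaves, in which every
non-leaf vertex has degree at least three, two (distinct) leaves `v i₁` and `v i₂` have a
common neighbor if and only if there is a constant `c` such that
`d(v i₁, v j) - d(v i₂, v j) = c` for every other leaf index `j`.  Here `d` is the
weighted distance, characterized by summing `1/w_e` along (unique) paths. -/
theorem leaves_common_neighbor_iff_distance_difference_constant
    {V : Type*} [Fintype V] [DecidableEq V]
    (G : SimpleGraph V) [DecidableRel G.Adj] (htree : G.IsTree)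
    (w : V → V → ℝ) (hw : ∀ a b, w a b = w b a)
    (hpos : ∀ a b, G.Adj a b → 0 < w a b)
    (k : ℕ) (hk : 3 ≤ k) (v : Fin k → V) (hinj : Function.Injective v)
    (hrange : Set.range v = {u : V | G.degree u = 1})
    (hdeg : ∀ u : V, G.degree u ≠ 1 → 3 ≤ G.degree u)
    (d : V → V → ℝ)
    (hd : ∀ (a b : V) (p : G.Walk a b), p.IsPath →
      d a b = (p.darts.map fun dd => 1 / w dd.toProd.1 dd.toProd.2).sum)
    (i₁ i₂ : Fin k) (hne : i₁ ≠ i₂) :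
    (∃ c : V, G.Adj (v i₁) c ∧ G.Adj (v i₂) c) ↔
      (∃ c : ℝ, ∀ j : Fin k, j ≠ i₁ → j ≠ i₂ →
        d (v i₁) (v j) - d (v i₂) (v j) = c) :=
  leaves_common_neighbor_iff_distance_difference_constant_general G htree w hpos k hk v hinj hrange
    hdeg d hd i₁ i₂
end

section
/- Let G₁ and G₂ be finite weighted trees, each having at least two vertices and no vertices of degree two, with leaf enumerations v_1^1, …, v_k^1 and v_1^2, …, v_k^2 of the same length k. If d_{G₁}(v_i^1, v_m^1) = d_{G₂}(v_i^2, v_m^2) for all i, m = 1, …, k, then there exists a graph isomorphism φ from G₁ onto G₂ with φ(v_i^1) = v_i^2 for all i = 1, …, k which maps every edge of G₁ to an edge of G₂ of the same weight. -/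
/-!
A vertex `c` lies on the path from `a` to `b` exactly when `d a c + d c b = d a b`, so the
distance `d` of a weighted tree determines its adjacency and its edge weights. Without vertices of
degree two, every vertex is the median of three leaves, and the distance from any vertex `p` to the
median `m` of `a, b, c` is the largest of the three quantities `(d p x + d p y - d x y) / 2` with
`x, y ∈ {a, b, c}`. Sending each vertex of the first tree to the median of the corresponding leaves
of the second therefore preserves distances and fixes the leaves; the same map in the other
direction makes it bijective, and a distance-preserving bijection of weighted trees is a
weight-preserving graph isomorphism.
-/

open Finset

namespace SimpleGraph.Walk

variable {V : Type*} {G : SimpleGraph V} {u v w : V}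

noncomputable def weightedLength_s7 (wt : V → V → ℝ) (p : G.Walk u v) : ℝ :=
  (p.darts.map fun dd => 1 / wt dd.toProd.1 dd.toProd.2).sum

variable (wt : V → V → ℝ)

@[simp]
theorem weightedLength_nil : (nil : G.Walk u u).weightedLength_s7 wt = 0 := rfl

@[simp]
theorem weightedLength_cons (h : G.Adj u v) (p : G.Walk v w) :
    (cons h p).weightedLength_s7 wt = 1 / wt u v + p.weightedLength_s7 wt := by
  simp [weightedLength_s7]

theorem weightedLength_append_s7 (p : G.Walk u v) (q : G.Walk v w) :
    (p.append q).weightedLength_s7 wt = p.weightedLength_s7 wt + q.weightedLength_s7 wt := by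
  simp [weightedLength_s7]

theorem weightedLength_reverse (hwt : ∀ a b, wt a b = wt b a) (p : G.Walk u v) :
    p.reverse.weightedLength_s7 wt = p.weightedLength_s7 wt := by
  induction p with
  | nil => rfl
  | cons h p ih => simp [weightedLength_append_s7, ih, hwt, add_comm]

theorem weightedLength_nonneg (hwt : ∀ a b, G.Adj a b → 0 < wt a b) (p : G.Walk u v) :
    0 ≤ p.weightedLength_s7 wt := by
  induction p with
  | nil => rfl
  | cons h p ih => exact add_nonneg (one_div_pos.2 (hwt _ _ h)).le ih

theorem IsPath.append_of_support_inter {p : G.Walk u v} {q : G.Walk v w} (hp : p.IsPath)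
    (hq : q.IsPath) (h : ∀ x ∈ p.support, x ∈ q.support → x = v) : (p.append q).IsPath := by
  rw [isPath_def, support_append]
  have hq' := hq.support_nodup
  rw [← q.cons_tail_support, List.nodup_cons] at hq'
  refine hp.support_nodup.append hq'.2 fun x hxp hxq => ?_
  obtain rfl := h x hxp (q.cons_tail_support ▸ List.mem_cons_of_mem _ hxq)
  exact hq'.1 hxq

end SimpleGraph.Walk

open SimpleGraph

section TreeDist

variable {V : Type*} {G : SimpleGraph V} {w d : V → V → ℝ}

structure IsTreeDist (G : SimpleGraph V) (w d : V → V → ℝ) : Prop where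
  preconnected : G.Preconnected
  weight_symm : ∀ a b, w a b = w b a
  weight_pos : ∀ a b, G.Adj a b → 0 < w a b
  dist_eq : ∀ a b (p : G.Walk a b), p.IsPath → d a b = p.weightedLength_s7 w

def Between (d : V → V → ℝ) (a c b : V) : Prop := d a c + d c b = d a b

def IsMedian (d : V → V → ℝ) (a b c m : V) : Prop :=
  Between d a m b ∧ Between d a m c ∧ Between d b m c

namespace IsTreeDist

variable (hT : IsTreeDist G w d)
include hT

theorem dist_self (a : V) : d a a = 0 := hT.dist_eq a a .nil .nil

theorem dist_comm (a b : V) : d a b = d b a := by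
  obtain ⟨p, hp⟩ := hT.preconnected.exists_isPath a b
  rw [hT.dist_eq a b p hp, hT.dist_eq b a p.reverse hp.reverse,
    Walk.weightedLength_reverse w hT.weight_symm]

theorem dist_nonneg (a b : V) : 0 ≤ d a b := by
  obtain ⟨p, hp⟩ := hT.preconnected.exists_isPath a b
  exact hT.dist_eq a b p hp ▸ p.weightedLength_nonneg w hT.weight_pos

theorem dist_of_adj {a b : V} (h : G.Adj a b) : d a b = 1 / w a b := by
  simpa using hT.dist_eq a b (.cons h .nil) (by simp [h.ne])

theorem dist_pos {a b : V} (hab : a ≠ b) : 0 < d a b := by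
  obtain ⟨p, hp⟩ := hT.preconnected.exists_isPath a b
  cases p with
  | nil => exact absurd rfl hab
  | cons h q =>
    rw [hT.dist_eq _ _ _ hp, Walk.weightedLength_cons]
    have := hT.weight_pos _ _ h
    have := q.weightedLength_nonneg w hT.weight_pos
    positivity

theorem eq_of_dist_eq_zero {a b : V} (h : d a b = 0) : a = b := by
  by_contra hab
  exact (hT.dist_pos hab).ne' h

theorem between_of_mem_support {a b c : V} {p : G.Walk a b} (hp : p.IsPath)
    (hc : c ∈ p.support) : Between d a c b := by
  classical
  rw [Between, hT.dist_eq a c _ (hp.takeUntil hc), hT.dist_eq c b _ (hp.dropUntil hc),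
    hT.dist_eq a b p hp, ← Walk.weightedLength_append_s7, p.take_spec hc]

theorem between_of_forall_dist_le {a b c m : V} {p : G.Walk a b} (hp : p.IsPath)
    (hm : m ∈ p.support) (hmin : ∀ x ∈ p.support, d m c ≤ d x c) : Between d a m c := by
  classical
  obtain ⟨q, hq⟩ := hT.preconnected.exists_isPath m c
  have hpq : ((p.takeUntil m hm).append q).IsPath := by
    refine (hp.takeUntil hm).append_of_support_inter hq fun x hxp hxq => ?_
    by_contra hxm
    -- such an `x` would be a vertex of `p` closer to `c` than `m`
    have hmx : Between d m x c := hT.between_of_mem_support hq hxq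
    have := hmin x (p.support_takeUntil_subset_support hm hxp)
    have := hT.dist_pos (Ne.symm hxm)
    unfold Between at hmx
    linarith
  rw [Between, hT.dist_eq a c _ hpq, Walk.weightedLength_append_s7,
    hT.dist_eq a m _ (hp.takeUntil hm), hT.dist_eq m c q hq]

theorem exists_mem_support_isMedian {a b : V} {p : G.Walk a b} (hp : p.IsPath) (c : V) :
    ∃ m ∈ p.support, IsMedian d a b c m := by
  obtain ⟨m, hm, hmin⟩ :=
    Set.exists_min_image _ (d · c) p.support.finite_toSet ⟨a, p.start_mem_support⟩
  refine ⟨m, hm, hT.between_of_mem_support hp hm, hT.between_of_forall_dist_le hp hm hmin, ?_⟩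
  exact hT.between_of_forall_dist_le hp.reverse (by simpa using hm) (by simpa using hmin)

theorem exists_isMedian (a b c : V) : ∃ m, IsMedian d a b c m := by
  obtain ⟨p, hp⟩ := hT.preconnected.exists_isPath a b
  obtain ⟨m, -, hm⟩ := hT.exists_mem_support_isMedian hp c
  exact ⟨m, hm⟩

theorem dist_add_dist_of_isMedian {a b c m : V} (h : IsMedian d a b c m) :
    d a c + d c b = d a b + 2 * d m c := by
  obtain ⟨hab, hac, hbc⟩ := h
  unfold Between at hab hac hbc
  linarith [hT.dist_comm c b, hT.dist_comm b m]

theorem dist_triangle (a b c : V) : d a c ≤ d a b + d b c := by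
  obtain ⟨m, hm⟩ := hT.exists_isMedian a c b
  linarith [hT.dist_add_dist_of_isMedian hm, hT.dist_nonneg m b]

theorem mem_support_of_between {a b c : V} (h : Between d a c b) {p : G.Walk a b}
    (hp : p.IsPath) : c ∈ p.support := by
  obtain ⟨m, hm, hmed⟩ := hT.exists_mem_support_isMedian hp c
  have hmc : d m c = 0 := by
    unfold Between at h
    linarith [hT.dist_add_dist_of_isMedian hmed]
  rwa [← hT.eq_of_dist_eq_zero hmc]

theorem between_comm {a b c : V} (h : Between d a c b) : Between d b c a := by
  unfold Between at h ⊢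
  linarith [hT.dist_comm a c, hT.dist_comm c b, hT.dist_comm a b]

theorem between_total {a b x y : V} (hx : Between d a x b)
    (hy : Between d a y b) : Between d a x y ∨ Between d a y x := by
  classical
  obtain ⟨p, hp⟩ := hT.preconnected.exists_isPath a b
  have hxp := hT.mem_support_of_between hx hp
  have hyp := hT.mem_support_of_between hy hp
  rw [← p.take_spec hxp, Walk.mem_support_append_iff] at hyp
  rcases hyp with hyp | hyp
  · exact .inr (hT.between_of_mem_support (hp.takeUntil hxp) hyp)
  · left
    have hxyb := hT.between_of_mem_support (hp.dropUntil hxp) hyp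
    unfold Between at hx hy hxyb ⊢
    linarith

theorem eq_or_eq_of_adj_of_between {a b c : V} (h : G.Adj a b) (hc : Between d a c b) :
    c = a ∨ c = b := by
  simpa using hT.mem_support_of_between hc (p := .cons h .nil) (by simp [h.ne])

theorem adj_iff_between (a b : V) :
    G.Adj a b ↔ a ≠ b ∧ ∀ c, Between d a c b → c = a ∨ c = b := by
  refine ⟨fun h => ⟨h.ne, fun c => hT.eq_or_eq_of_adj_of_between h⟩, fun ⟨hab, hc⟩ => ?_⟩
  obtain ⟨p, hp⟩ := hT.preconnected.exists_isPath a b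
  cases p with
  | nil => exact absurd rfl hab
  | @cons _ x _ h q =>
    rcases hc x (hT.between_of_mem_support hp (by simp)) with rfl | rfl
    · exact absurd rfl h.ne
    · exact h

theorem between_or_between {x y m : V} (h : Between d x m y) (p : V) :
    Between d p m x ∨ Between d p m y := by
  -- `t` is where the path from `p` meets the path from `x` to `y`
  obtain ⟨t, hxy, hxp, hyp⟩ := hT.exists_isMedian x y p
  have := hT.dist_triangle p t m
  have := hT.dist_comm t p
  rcases hT.between_total hxy h with htm | hmt
  · right
    unfold Between at h hxy hyp htm ⊢
    linarith [hT.dist_triangle p m y, hT.dist_comm y t, hT.dist_comm y p]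
  · left
    unfold Between at h hxy hxp hmt ⊢
    linarith [hT.dist_triangle p m x, hT.dist_comm x t, hT.dist_comm x p, hT.dist_comm m t,
      hT.dist_comm x m]

theorem dist_eq_max_of_isMedian {a b c m : V} (h : IsMedian d a b c m) (p : V) :
    d p m = max (max ((d p a + d p b - d a b) / 2) ((d p a + d p c - d a c) / 2))
      ((d p b + d p c - d b c) / 2) := by
  obtain ⟨hab, hac, hbc⟩ := h
  have hle {x y : V} (hxy : Between d x m y) : (d p x + d p y - d x y) / 2 ≤ d p m := by
    unfold Between at hxy
    linarith [hT.dist_triangle p m x, hT.dist_triangle p m y, hT.dist_comm m x]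
  have heq {x y : V} (hxy : Between d x m y) (hx : Between d p m x) (hy : Between d p m y) :
      d p m = (d p x + d p y - d x y) / 2 := by
    unfold Between at hxy hx hy
    linarith [hT.dist_comm m x]
  refine le_antisymm ?_ (max_le (max_le (hle hab) (hle hac)) (hle hbc))
  -- `m` lies between `p` and at least two of `a, b, c`
  by_cases ha : Between d p m a
  · rcases hT.between_or_between hbc p with hb | hc
    · exact (heq hab ha hb).le.trans (le_max_of_le_left (le_max_left _ _))
    · exact (heq hac ha hc).le.trans (le_max_of_le_left (le_max_right _ _))
  · have hb := (hT.between_or_between hab p).resolve_left ha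
    have hc := (hT.between_or_between hac p).resolve_left ha
    exact (heq hbc hb hc).le.trans (le_max_right _ _)

theorem between_or_between_of_adj {x y : V} (h : G.Adj x y) (u : V) :
    Between d u x y ∨ Between d u y x := by
  obtain ⟨m, hxy, hxu, hyu⟩ := hT.exists_isMedian x y u
  rcases hT.eq_or_eq_of_adj_of_between h hxy with rfl | rfl
  · exact .inl (hT.between_comm hyu)
  · exact .inr (hT.between_comm hxu)

theorem eq_of_adj_of_between {u l y y' : V} (hy : G.Adj l y) (hy' : G.Adj l y')
    (h : Between d u y l) (h' : Between d u y' l) : y = y' := by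
  have key {y y' : V} (hy : G.Adj l y) (hy' : G.Adj l y') (h : Between d u y l)
      (h' : Between d u y' l) (hyy' : Between d u y y') : y' = y := by
    have hly : Between d l y' y := by
      apply hT.between_comm
      unfold Between at h h' hyy' ⊢
      linarith
    exact (hT.eq_or_eq_of_adj_of_between hy hly).resolve_left hy'.ne'
  rcases hT.between_total h h' with hyy' | hy'y
  · exact (key hy hy' h h' hyy').symm
  · exact key hy' hy h' h hy'y

theorem between_of_adj_of_adj {u x y lx ly : V} (hx : G.Adj u x) (hy : G.Adj u y) (hxy : x ≠ y)
    (hlx : Between d u x lx) (hly : Between d u y ly) : Between d lx u ly := by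
  have hlxy : Between d lx u y := (hT.between_or_between_of_adj hy lx).resolve_right
    fun h => hxy (hT.eq_of_adj_of_between hx hy (hT.between_comm hlx) h)
  refine hT.between_comm ((hT.between_or_between hlxy ly).resolve_right fun h => ?_)
  unfold Between at h hly
  linarith [hT.dist_pos hy.ne, hT.dist_comm ly y, hT.dist_comm ly u]

variable [Fintype V] [DecidableRel G.Adj]

theorem exists_degree_eq_one_between {u x : V} (h : G.Adj u x) :
    ∃ l, G.degree l = 1 ∧ Between d u x l := by
  -- a vertex beyond `x` farthest from `u` is a leaf
  obtain ⟨l, hl, hmax⟩ := Set.exists_max_image {l | Between d u x l} (d u ·) (Set.toFinite _)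
    ⟨x, by simp [Between, hT.dist_self]⟩
  have hl' : Between d u x l := hl
  have hul : u ≠ l := by
    rintro rfl
    unfold Between at hl'
    linarith [hT.dist_pos h.ne, hT.dist_nonneg x u, hT.dist_self u]
  have hnbr {y : V} (hy : G.Adj l y) : Between d u y l := by
    refine (hT.between_or_between_of_adj hy u).resolve_left fun hly => ?_
    have huxy : Between d u x y := by
      unfold Between at hl' hly ⊢
      linarith [hT.dist_triangle x l y, hT.dist_triangle u x y]
    have := hmax y huxy
    unfold Between at hly
    linarith [hT.dist_pos hy.ne]
  have : Nontrivial V := ⟨u, l, hul⟩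
  refine ⟨l, le_antisymm ?_ (hT.preconnected.degree_pos_of_nontrivial l), hl'⟩
  rw [← card_neighborFinset_eq_degree, Finset.card_le_one]
  intro y hy y' hy'
  rw [mem_neighborFinset] at hy hy'
  exact hT.eq_of_adj_of_between hy hy' (hnbr hy) (hnbr hy')

theorem exists_degree_eq_one_isMedian [Nontrivial V] {u : V} (hu : G.degree u ≠ 2) :
    ∃ x y z, G.degree x = 1 ∧ G.degree y = 1 ∧ G.degree z = 1 ∧ IsMedian d x y z u := by
  have hpos := hT.preconnected.degree_pos_of_nontrivial u
  by_cases hleaf : G.degree u = 1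
  · have huu : Between d u u u := by simp [Between, hT.dist_self]
    exact ⟨u, u, u, hleaf, hleaf, hleaf, huu, huu, huu⟩
  have h3 : 2 < #(G.neighborFinset u) := by
    rw [card_neighborFinset_eq_degree]
    omega
  obtain ⟨x, hx, y, hy, z, hz, hxy, hxz, hyz⟩ := Finset.two_lt_card.mp h3
  simp only [mem_neighborFinset] at hx hy hz
  obtain ⟨lx, hlx, hbx⟩ := hT.exists_degree_eq_one_between hx
  obtain ⟨ly, hly, hby⟩ := hT.exists_degree_eq_one_between hy
  obtain ⟨lz, hlz, hbz⟩ := hT.exists_degree_eq_one_between hz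
  exact ⟨lx, ly, lz, hlx, hly, hlz, hT.between_of_adj_of_adj hx hy hxy hbx hby,
    hT.between_of_adj_of_adj hx hz hxz hbx hbz, hT.between_of_adj_of_adj hy hz hyz hby hbz⟩

theorem exists_isMedian_of_leaves_subset_range [Nontrivial V] (hdeg : ∀ u, G.degree u ≠ 2)
    {ι : Type*} {v : ι → V} (hv : {u | G.degree u = 1} ⊆ Set.range v) (u : V) :
    ∃ i j l, IsMedian d (v i) (v j) (v l) u := by
  obtain ⟨x, y, z, hx, hy, hz, hm⟩ := hT.exists_degree_eq_one_isMedian (hdeg u)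
  obtain ⟨i, rfl⟩ := hv hx
  obtain ⟨j, rfl⟩ := hv hy
  obtain ⟨l, rfl⟩ := hv hz
  exact ⟨i, j, l, hm⟩

end IsTreeDist

end TreeDist

section Isometry

variable {V₁ V₂ : Type*} {G₁ : SimpleGraph V₁} {G₂ : SimpleGraph V₂} {w₁ d₁ : V₁ → V₁ → ℝ}
  {w₂ d₂ : V₂ → V₂ → ℝ} (hT₁ : IsTreeDist G₁ w₁ d₁) (hT₂ : IsTreeDist G₂ w₂ d₂)
include hT₁ hT₂

theorem exists_isometry_of_forall_isMedian {ι : Type*} {v₁ : ι → V₁} {v₂ : ι → V₂}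
    (hmed : ∀ u, ∃ i j l, IsMedian d₁ (v₁ i) (v₁ j) (v₁ l) u)
    (hdist : ∀ i j, d₁ (v₁ i) (v₁ j) = d₂ (v₂ i) (v₂ j)) :
    ∃ φ : V₁ → V₂, (∀ a b, d₂ (φ a) (φ b) = d₁ a b) ∧ ∀ i, φ (v₁ i) = v₂ i := by
  choose i j l hu using hmed
  choose φ hφ using fun u => hT₂.exists_isMedian (v₂ (i u)) (v₂ (j u)) (v₂ (l u))
  have hv (r : ι) (u : V₁) : d₂ (v₂ r) (φ u) = d₁ (v₁ r) u := by
    rw [hT₁.dist_eq_max_of_isMedian (hu u), hT₂.dist_eq_max_of_isMedian (hφ u)]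
    simp only [hdist]
  have hiso (a b : V₁) : d₂ (φ a) (φ b) = d₁ a b := by
    rw [hT₁.dist_eq_max_of_isMedian (hu b), hT₂.dist_eq_max_of_isMedian (hφ b)]
    simp only [hT₂.dist_comm (φ a) (v₂ _), hT₁.dist_comm a (v₁ _), hv, hdist]
  exact ⟨φ, hiso, fun r => hT₂.eq_of_dist_eq_zero (by rw [hT₂.dist_comm, hv, hT₁.dist_self])⟩

theorem injective_of_isometry {φ : V₁ → V₂} (hφ : ∀ a b, d₂ (φ a) (φ b) = d₁ a b) :
    φ.Injective :=
  fun a b h => hT₁.eq_of_dist_eq_zero (by rw [← hφ, h, hT₂.dist_self])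

theorem bijective_of_isometry_of_isometry [Fintype V₁] [Fintype V₂] {φ : V₁ → V₂}
    {ψ : V₂ → V₁} (hφ : ∀ a b, d₂ (φ a) (φ b) = d₁ a b) (hψ : ∀ a b, d₁ (ψ a) (ψ b) = d₂ a b) :
    φ.Bijective := by
  have hφinj := injective_of_isometry hT₁ hT₂ hφ
  have hψinj := injective_of_isometry hT₂ hT₁ hψ
  exact (Fintype.bijective_iff_injective_and_card φ).mpr
    ⟨hφinj, (Fintype.card_le_of_injective φ hφinj).antisymm (Fintype.card_le_of_injective ψ hψinj)⟩

theorem adj_iff_of_isometry (e : V₁ ≃ V₂) (he : ∀ a b, d₂ (e a) (e b) = d₁ a b) (a b : V₁) :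
    G₂.Adj (e a) (e b) ↔ G₁.Adj a b := by
  rw [hT₁.adj_iff_between, hT₂.adj_iff_between, e.injective.ne_iff, ← e.forall_congr_right]
  simp only [Between, he, e.injective.eq_iff]

theorem weight_eq_of_isometry {φ : V₁ → V₂} (hφ : ∀ a b, d₂ (φ a) (φ b) = d₁ a b) {a b : V₁}
    (h₁ : G₁.Adj a b) (h₂ : G₂.Adj (φ a) (φ b)) : w₂ (φ a) (φ b) = w₁ a b := by
  have := hφ a b
  rwa [hT₁.dist_of_adj h₁, hT₂.dist_of_adj h₂, one_div, one_div, inv_inj] at this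

end Isometry

theorem weighted_trees_with_equal_leaf_distances_isomorphic_general
    {V₁ V₂ : Type*} [Fintype V₁] [Fintype V₂]
    (G₁ : SimpleGraph V₁) [DecidableRel G₁.Adj] (htree₁ : G₁.IsTree)
    (G₂ : SimpleGraph V₂) [DecidableRel G₂.Adj] (htree₂ : G₂.IsTree)
    (hcard₁ : 2 ≤ Fintype.card V₁) (hcard₂ : 2 ≤ Fintype.card V₂)
    (hdeg₁ : ∀ u : V₁, G₁.degree u ≠ 2) (hdeg₂ : ∀ u : V₂, G₂.degree u ≠ 2)
    (w₁ : V₁ → V₁ → ℝ) (hw₁ : ∀ a b, w₁ a b = w₁ b a)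
    (hpos₁ : ∀ a b, G₁.Adj a b → 0 < w₁ a b)
    (w₂ : V₂ → V₂ → ℝ) (hw₂ : ∀ a b, w₂ a b = w₂ b a)
    (hpos₂ : ∀ a b, G₂.Adj a b → 0 < w₂ a b)
    (k : ℕ)
    (v₁ : Fin k → V₁)
    (hrange₁ : Set.range v₁ = {u : V₁ | G₁.degree u = 1})
    (v₂ : Fin k → V₂)
    (hrange₂ : Set.range v₂ = {u : V₂ | G₂.degree u = 1})
    (d₁ : V₁ → V₁ → ℝ)
    (hd₁ : ∀ (a b : V₁) (p : G₁.Walk a b), p.IsPath →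
      d₁ a b = (p.darts.map fun dd => 1 / w₁ dd.toProd.1 dd.toProd.2).sum)
    (d₂ : V₂ → V₂ → ℝ)
    (hd₂ : ∀ (a b : V₂) (p : G₂.Walk a b), p.IsPath →
      d₂ a b = (p.darts.map fun dd => 1 / w₂ dd.toProd.1 dd.toProd.2).sum)
    (hdist : ∀ i m : Fin k, d₁ (v₁ i) (v₁ m) = d₂ (v₂ i) (v₂ m)) :
    ∃ φ : G₁ ≃g G₂, (∀ i : Fin k, φ (v₁ i) = v₂ i) ∧
      ∀ a b : V₁, G₁.Adj a b → w₂ (φ a) (φ b) = w₁ a b := by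
  have hT₁ : IsTreeDist G₁ w₁ d₁ := ⟨htree₁.connected.preconnected, hw₁, hpos₁, hd₁⟩
  have hT₂ : IsTreeDist G₂ w₂ d₂ := ⟨htree₂.connected.preconnected, hw₂, hpos₂, hd₂⟩
  have : Nontrivial V₁ := Fintype.one_lt_card_iff_nontrivial.mp hcard₁
  have : Nontrivial V₂ := Fintype.one_lt_card_iff_nontrivial.mp hcard₂
  obtain ⟨φ, hφ, hφv⟩ := exists_isometry_of_forall_isMedian hT₁ hT₂
    (hT₁.exists_isMedian_of_leaves_subset_range hdeg₁ hrange₁.ge) hdist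
  obtain ⟨ψ, hψ, -⟩ := exists_isometry_of_forall_isMedian hT₂ hT₁
    (hT₂.exists_isMedian_of_leaves_subset_range hdeg₂ hrange₂.ge) fun i m => (hdist i m).symm
  let e := Equiv.ofBijective φ (bijective_of_isometry_of_isometry hT₁ hT₂ hφ hψ)
  have hadj := adj_iff_of_isometry hT₁ hT₂ e hφ
  exact ⟨⟨e, hadj _ _⟩, hφv, fun a b h => weight_eq_of_isometry hT₁ hT₂ hφ h ((hadj a b).mpr h)⟩

/-- two finite weighted trees with at least two vertices and no vertices of
degree two whose leaves are enumerated with the same length `k` and which have the same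
pairwise distance matrices between leaves are isomorphic via a weight-preserving graph
isomorphism matching the leaf enumerations.  Here the distance functions `d₁, d₂` are
characterized by summing `1/w_e` along (unique) paths. -/
theorem weighted_trees_with_equal_leaf_distances_isomorphic
    {V₁ V₂ : Type*} [Fintype V₁] [DecidableEq V₁] [Fintype V₂] [DecidableEq V₂]
    (G₁ : SimpleGraph V₁) [DecidableRel G₁.Adj] (htree₁ : G₁.IsTree)
    (G₂ : SimpleGraph V₂) [DecidableRel G₂.Adj] (htree₂ : G₂.IsTree)
    (hcard₁ : 2 ≤ Fintype.card V₁) (hcard₂ : 2 ≤ Fintype.card V₂)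
    (hdeg₁ : ∀ u : V₁, G₁.degree u ≠ 2) (hdeg₂ : ∀ u : V₂, G₂.degree u ≠ 2)
    (w₁ : V₁ → V₁ → ℝ) (hw₁ : ∀ a b, w₁ a b = w₁ b a)
    (hpos₁ : ∀ a b, G₁.Adj a b → 0 < w₁ a b)
    (w₂ : V₂ → V₂ → ℝ) (hw₂ : ∀ a b, w₂ a b = w₂ b a)
    (hpos₂ : ∀ a b, G₂.Adj a b → 0 < w₂ a b)
    (k : ℕ)
    (v₁ : Fin k → V₁) (hinj₁ : Function.Injective v₁)
    (hrange₁ : Set.range v₁ = {u : V₁ | G₁.degree u = 1})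
    (v₂ : Fin k → V₂) (hinj₂ : Function.Injective v₂)
    (hrange₂ : Set.range v₂ = {u : V₂ | G₂.degree u = 1})
    (d₁ : V₁ → V₁ → ℝ)
    (hd₁ : ∀ (a b : V₁) (p : G₁.Walk a b), p.IsPath →
      d₁ a b = (p.darts.map fun dd => 1 / w₁ dd.toProd.1 dd.toProd.2).sum)
    (d₂ : V₂ → V₂ → ℝ)
    (hd₂ : ∀ (a b : V₂) (p : G₂.Walk a b), p.IsPath →
      d₂ a b = (p.darts.map fun dd => 1 / w₂ dd.toProd.1 dd.toProd.2).sum)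
    (hdist : ∀ i m : Fin k, d₁ (v₁ i) (v₁ m) = d₂ (v₂ i) (v₂ m)) :
    ∃ φ : G₁ ≃g G₂, (∀ i : Fin k, φ (v₁ i) = v₂ i) ∧
      ∀ a b : V₁, G₁.Adj a b → w₂ (φ a) (φ b) = w₁ a b :=
  weighted_trees_with_equal_leaf_distances_isomorphic_general G₁ htree₁ G₂ htree₂ hcard₁ hcard₂
    hdeg₁ hdeg₂ w₁ hw₁ hpos₁ w₂ hw₂ hpos₂ k v₁ hrange₁ v₂ hrange₂ d₁ hd₁ d₂ hd₂ hdist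
end

section
/- Consider the 6×6 real matrix A with rows (1,0,0,−1,0,0), (0,1,0,0,−1,0), (0,0,1,0,0,−1), (−1,0,0,3,−1,−1), (0,−1,0,−1,3,−1), (0,0,−1,−1,−1,3). Then the lower-right 3×3 block M = [[3,−1,−1],[−1,3,−1],[−1,−1,3]] is invertible, and the Schur complement of A with respect to its first three indices, namely I₃ − I₃ M⁻¹ I₃, equals (1/4)·(3·I₃ − J₃), i.e. the matrix (1/4)·[[2,−1,−1],[−1,2,−1],[−1,−1,2]]. Moreover this matrix also equals the Schur complement with respect to the first three indices of the 4×4 matrix (3/4)·[[1,0,0,−1],[0,1,0,−1],[0,0,1,−1],[−1,−1,−1,3]]. -/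
/-!
With `J` the all-ones matrix, `J * J = n • J`, so matrices of the form `c • 1 - J` are inverted by
Sherman–Morrison: `(c • 1 - J)⁻¹ = c⁻¹ • (1 + (c - n)⁻¹ • J)`. For the triangle with pendant edges
the interior block is `4 • 1 - J`, with inverse `(1 + J) / 4`, so the Schur complement is
`1 - (1 + J) / 4 = (3 • 1 - J) / 4`. For a star with `n` leaves and edge weight `w` the interior
block is the scalar `w n`, and eliminating it leaves `w • 1 - (w / n) • J = (w / n) • (n • 1 - J)`,
which is again `(3 • 1 - J) / 4` for `n = 3`, `w = 3 / 4`.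
-/

open Matrix

section AllOnes

variable {l m n R : Type*} [Fintype m] [Fintype n] [DecidableEq n]

omit [Fintype n] [DecidableEq n] in
theorem of_one_mul_of_one [NonAssocSemiring R] :
    (of 1 : Matrix l m R) * (of 1 : Matrix m n R) = (Fintype.card m : R) • of 1 := by
  ext i j
  simp [mul_apply]

variable [Field R] {c : R}

theorem smul_one_sub_of_one_mul_inv_smul_one_add_of_one (hc₀ : c ≠ 0) (hc : c ≠ Fintype.card n) :
    (c • 1 - of 1 : Matrix n n R) * (c⁻¹ • (1 + (c - Fintype.card n)⁻¹ • of 1)) = 1 := by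
  have hc' : c - Fintype.card n ≠ 0 := sub_ne_zero.mpr hc
  simp only [sub_mul, mul_add, mul_one, smul_mul, one_mul, Matrix.mul_smul, of_one_mul_of_one,
    smul_smul]
  match_scalars <;> field_simp
  ring

theorem isUnit_smul_one_sub_of_one (hc₀ : c ≠ 0) (hc : c ≠ Fintype.card n) :
    IsUnit (c • 1 - of 1 : Matrix n n R) :=
  (isUnit_iff_isUnit_det _).mpr <|
    isUnit_det_of_right_inverse (smul_one_sub_of_one_mul_inv_smul_one_add_of_one hc₀ hc)

theorem inv_smul_one_sub_of_one (hc₀ : c ≠ 0) (hc : c ≠ Fintype.card n) :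
    (c • 1 - of 1 : Matrix n n R)⁻¹ = c⁻¹ • (1 + (c - Fintype.card n)⁻¹ • of 1) :=
  inv_eq_right_inv (smul_one_sub_of_one_mul_inv_smul_one_add_of_one hc₀ hc)

theorem one_sub_inv_card_add_one_smul_one_sub_of_one [CharZero R] :
    1 - ((Fintype.card n + 1 : R) • 1 - of 1 : Matrix n n R)⁻¹ =
      (Fintype.card n + 1 : R)⁻¹ • ((Fintype.card n : R) • 1 - of 1) := by
  have hk : (Fintype.card n + 1 : R) ≠ 0 := Nat.cast_add_one_ne_zero _
  rw [inv_smul_one_sub_of_one hk (by simp), add_sub_cancel_left, inv_one, one_smul]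
  match_scalars <;> field_simp
  ring

theorem inv_smul_one_of_ne_zero (hc₀ : c ≠ 0) : (c • 1 : Matrix n n R)⁻¹ = c⁻¹ • 1 :=
  inv_eq_right_inv (by rw [smul_mul_smul_comm, mul_inv_cancel₀ hc₀, one_mul, one_smul])

theorem weighted_star_schur_complement_eq {w : R} (hw : w ≠ 0) (hn : (Fintype.card n : R) ≠ 0) :
    (w • 1 : Matrix n n R) - ((-w) • of 1 : Matrix n (Fin 1) R) *
        ((w * Fintype.card n) • 1 : Matrix (Fin 1) (Fin 1) R)⁻¹ *
        ((-w) • of 1 : Matrix (Fin 1) n R) =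
      (w / Fintype.card n) • ((Fintype.card n : R) • 1 - of 1) := by
  rw [inv_smul_one_of_ne_zero (mul_ne_zero hw hn)]
  simp only [Matrix.smul_mul, Matrix.mul_smul, Matrix.mul_one, of_one_mul_of_one, Fintype.card_fin,
    Nat.cast_one, smul_smul]
  match_scalars <;> field_simp

end AllOnes

/-- the Schur complement with respect to the first three indices of the
weighted Laplacian of the triangle with three pendant unit-weight edges equals
`(1/4) • (3 I₃ - J₃)`, and this also equals the Schur complement with respect to the
first three indices of `(3/4) •` the Laplacian of a 3-star. -/
theorem triangle_with_pendants_and_star_have_equal_schur_complements :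
    let A : Matrix (Fin 6) (Fin 6) ℝ :=
      !![1, 0, 0, -1, 0, 0;
         0, 1, 0, 0, -1, 0;
         0, 0, 1, 0, 0, -1;
         -1, 0, 0, 3, -1, -1;
         0, -1, 0, -1, 3, -1;
         0, 0, -1, -1, -1, 3];
    let f : Fin 3 → Fin 6 := fun i => ⟨i.1, by have := i.isLt; omega⟩;
    let g : Fin 3 → Fin 6 := fun i => ⟨i.1 + 3, by have := i.isLt; omega⟩;
    let M : Matrix (Fin 3) (Fin 3) ℝ := !![3, -1, -1; -1, 3, -1; -1, -1, 3];
    let A' : Matrix (Fin 4) (Fin 4) ℝ :=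
      (3 / 4 : ℝ) • !![1, 0, 0, -1; 0, 1, 0, -1; 0, 0, 1, -1; -1, -1, -1, 3];
    let f' : Fin 3 → Fin 4 := fun i => ⟨i.1, by have := i.isLt; omega⟩;
    let g' : Fin 1 → Fin 4 := fun i => ⟨i.1 + 3, by have := i.isLt; omega⟩;
    A.submatrix g g = M ∧
    IsUnit M ∧
    A.submatrix f f - A.submatrix f g * M⁻¹ * A.submatrix g f =
      (1 : Matrix (Fin 3) (Fin 3) ℝ) - 1 * M⁻¹ * 1 ∧
    A.submatrix f f - A.submatrix f g * M⁻¹ * A.submatrix g f =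
      (1 / 4 : ℝ) • !![2, -1, -1; -1, 2, -1; -1, -1, 2] ∧
    A'.submatrix f' f' - A'.submatrix f' g' * (A'.submatrix g' g')⁻¹ * A'.submatrix g' f' =
      (1 / 4 : ℝ) • !![2, -1, -1; -1, 2, -1; -1, -1, 2] := by
  intro A f g M A' f' g'
  have hM : M = (Fintype.card (Fin 3) + 1 : ℝ) • 1 - of 1 := by
    ext i j; fin_cases i <;> fin_cases j <;> norm_num [M]
  have hK₃ : !![2, -1, -1; -1, 2, -1; -1, -1, 2] =
      (Fintype.card (Fin 3) : ℝ) • (1 : Matrix (Fin 3) (Fin 3) ℝ) - of 1 := by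
    ext i j; fin_cases i <;> fin_cases j <;> norm_num [one_apply]
  have hff : A.submatrix f f = 1 := by ext i j; fin_cases i <;> fin_cases j <;> rfl
  have hfg : A.submatrix f g = -1 := by
    ext i j; fin_cases i <;> fin_cases j <;> simp [A, f, g, one_apply]
  have hgf : A.submatrix g f = -1 := by
    ext i j; fin_cases i <;> fin_cases j <;> simp [A, f, g, one_apply]
  have hgg : A.submatrix g g = M := by ext i j; fin_cases i <;> fin_cases j <;> rfl
  have hpendant : A.submatrix f f - A.submatrix f g * M⁻¹ * A.submatrix g f =
      1 - 1 * M⁻¹ * 1 := by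
    simp only [hff, hfg, hgf, Matrix.neg_mul, Matrix.mul_neg, neg_neg]
  have htriangle : (1 : Matrix (Fin 3) (Fin 3) ℝ) - 1 * M⁻¹ * 1 =
      (1 / 4 : ℝ) • !![2, -1, -1; -1, 2, -1; -1, -1, 2] := by
    rw [Matrix.one_mul, Matrix.mul_one, hM, one_sub_inv_card_add_one_smul_one_sub_of_one, hK₃]
    norm_num
  have hf'f' : A'.submatrix f' f' = (3 / 4 : ℝ) • 1 := by
    ext i j; fin_cases i <;> fin_cases j <;> simp [A', f', one_apply]
  have hf'g' : A'.submatrix f' g' = (-(3 / 4) : ℝ) • of 1 := by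
    ext i j; fin_cases i <;> simp [A', f', g', Fin.fin_one_eq_zero j]
  have hg'f' : A'.submatrix g' f' = (-(3 / 4) : ℝ) • of 1 := by
    ext i j; fin_cases j <;> simp [A', f', g', Fin.fin_one_eq_zero i]
  have hg'g' : A'.submatrix g' g' = ((3 / 4 : ℝ) * Fintype.card (Fin 3)) • 1 := by
    ext i j; norm_num [A', g', Fin.fin_one_eq_zero i, Fin.fin_one_eq_zero j]
  refine ⟨hgg, hM ▸ isUnit_smul_one_sub_of_one (by positivity) (by simp), hpendant,
    hpendant.trans htriangle, ?_⟩
  rw [hf'f', hf'g', hg'f', hg'g', weighted_star_schur_complement_eq (by norm_num) (by simp), hK₃]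
  norm_num
end

section
/- Let S₁ := (1/4)·(4·I₄ − J₄) (the Schur complement with respect to the four leaves of the weighted Laplacian of the star with four edges of unit weight), and let S₂ be the Schur complement with respect to the first four indices of the 6×6 matrix with rows (a,0,0,0,−a,0), (0,a,0,0,−a,0), (0,0,a,0,0,−a), (0,0,0,a,0,−a), (−a,−a,0,0,2a+b,−b), (0,0,−a,−a,−b,2a+b), where a = b = 6/5. Then every diagonal entry of S₁ and every diagonal entry of S₂ equals 3/4, but S₁ ≠ S₂. -/
/-!
Eliminating the two hubs of the double star (leaf edges of weight `a`, hub edge of weight `b`)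
leaves the Schur complement with diagonal `a (2a + 3b) / (4 (a + b))`, entry
`-a (2a + b) / (4 (a + b))` between leaves on the same hub and `-a b / (4 (a + b))` between
leaves on different hubs. For `a = b = 6/5` the diagonal is `3/4`, as for the star, but two
leaves on a common hub are coupled by `-9/20` instead of the star's `-1/4`.
-/

open Matrix

theorem Matrix.inv_fin_two_of {K : Type*} [Field K] (a b c d : K) :
    !![a, b; c, d]⁻¹ = (a * d - b * c)⁻¹ • !![d, -b; -c, a] := by
  rw [inv_def, det_fin_two_of, adjugate_fin_two_of, Ring.inverse_eq_inv']

theorem Matrix.one_div_smul_nsmul_one_sub_ones_apply {K ι : Type*} [Field K] [DecidableEq ι]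
    (k : ℕ) (i j : ι) :
    ((1 / k : K) • (k • (1 : Matrix ι ι K) - of fun _ _ => 1) : Matrix ι ι K) i j =
      if i = j then ((k : K) - 1) / k else -1 / k := by
  split_ifs with h
  · subst h
    simp [Matrix.natCast_apply]
    ring
  · simp [Matrix.natCast_apply, h]
    ring

noncomputable def schurComplement {K ι m n : Type*} [Field K] [Fintype n] [DecidableEq n]
    (A : Matrix ι ι K) (f : m → ι) (g : n → ι) : Matrix m m K :=
  A.submatrix f f - A.submatrix f g * (A.submatrix g g)⁻¹ * A.submatrix g f

-- Leaves `0, 1` hang on hub `4` and leaves `2, 3` on hub `5`.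
def doubleStarLaplacian (a b : ℝ) : Matrix (Fin 6) (Fin 6) ℝ :=
  !![a, 0, 0, 0, -a, 0;
     0, a, 0, 0, -a, 0;
     0, 0, a, 0, 0, -a;
     0, 0, 0, a, 0, -a;
     -a, -a, 0, 0, 2*a+b, -b;
     0, 0, -a, -a, -b, 2*a+b]

theorem schurComplement_doubleStarLaplacian {a b : ℝ} (ha : a ≠ 0) (hab : a + b ≠ 0) :
    schurComplement (doubleStarLaplacian a b) (Fin.castAdd 2) (Fin.addNat · 4) =
      !![a * (2 * a + 3 * b) / (4 * (a + b)), -a * (2 * a + b) / (4 * (a + b)),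
          -a * b / (4 * (a + b)), -a * b / (4 * (a + b));
        -a * (2 * a + b) / (4 * (a + b)), a * (2 * a + 3 * b) / (4 * (a + b)),
          -a * b / (4 * (a + b)), -a * b / (4 * (a + b));
        -a * b / (4 * (a + b)), -a * b / (4 * (a + b)),
          a * (2 * a + 3 * b) / (4 * (a + b)), -a * (2 * a + b) / (4 * (a + b));
        -a * b / (4 * (a + b)), -a * b / (4 * (a + b)),
          -a * (2 * a + b) / (4 * (a + b)), a * (2 * a + 3 * b) / (4 * (a + b))] := by
  have hleaves : (doubleStarLaplacian a b).submatrix (Fin.castAdd 2) (Fin.castAdd 2) = a • 1 := by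
    ext i j; fin_cases i <;> fin_cases j <;> simp [doubleStarLaplacian, one_apply]
  have hleavesHubs : (doubleStarLaplacian a b).submatrix (Fin.castAdd 2) (Fin.addNat · 4) =
      -a • !![1, 0; 1, 0; 0, 1; 0, 1] := by
    ext i j; fin_cases i <;> fin_cases j <;> simp [doubleStarLaplacian]
  have hhubsLeaves : (doubleStarLaplacian a b).submatrix (Fin.addNat · 4) (Fin.castAdd 2) =
      -a • !![1, 1, 0, 0; 0, 0, 1, 1] := by
    ext i j; fin_cases i <;> fin_cases j <;> simp [doubleStarLaplacian]
  have hhubs : (doubleStarLaplacian a b).submatrix (Fin.addNat · 4) (Fin.addNat · 4) =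
      !![2 * a + b, -b; -b, 2 * a + b] := by
    ext i j; fin_cases i <;> fin_cases j <;> rfl
  have hdet : (2 * a + b) * (2 * a + b) - -b * -b = 4 * a * (a + b) := by ring
  rw [schurComplement, hleaves, hleavesHubs, hhubsLeaves, hhubs, inv_fin_two_of, hdet]
  ext i j
  fin_cases i <;> fin_cases j <;> simp [one_apply] <;> field_simp <;> ring

/-- the Schur complement `S₁ = (1/4)(4 I₄ - J₄)` of the 4-star with unit
weights and the Schur complement `S₂` onto the first four indices of the Laplacian of
the symmetric double star with all weights `6/5` have all diagonal entries equal to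
`3/4`, yet `S₁ ≠ S₂`. -/
theorem star_and_double_star_same_diagonal_different_schur :
    let S₁ : Matrix (Fin 4) (Fin 4) ℝ :=
      (1 / 4 : ℝ) • (4 • (1 : Matrix (Fin 4) (Fin 4) ℝ) - Matrix.of fun _ _ => 1);
    let a : ℝ := 6 / 5;
    let bb : ℝ := 6 / 5;
    let A : Matrix (Fin 6) (Fin 6) ℝ :=
      !![a, 0, 0, 0, -a, 0;
         0, a, 0, 0, -a, 0;
         0, 0, a, 0, 0, -a;
         0, 0, 0, a, 0, -a;
         -a, -a, 0, 0, 2*a+bb, -bb;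
         0, 0, -a, -a, -bb, 2*a+bb];
    let f : Fin 4 → Fin 6 := fun i => ⟨i.1, by have := i.isLt; omega⟩;
    let g : Fin 2 → Fin 6 := fun i => ⟨i.1 + 4, by have := i.isLt; omega⟩;
    let S₂ : Matrix (Fin 4) (Fin 4) ℝ :=
      A.submatrix f f - A.submatrix f g * (A.submatrix g g)⁻¹ * A.submatrix g f;
    (∀ i : Fin 4, S₁ i i = 3 / 4) ∧ (∀ i : Fin 4, S₂ i i = 3 / 4) ∧ S₁ ≠ S₂ := by
  intro S₁ a bb A f g S₂
  have hS₁ (i j : Fin 4) : S₁ i j = if i = j then ((4 : ℕ) - 1 : ℝ) / (4 : ℕ) else -1 / (4 : ℕ) :=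
    one_div_smul_nsmul_one_sub_ones_apply 4 i j
  have hS₂ : S₂ =
      schurComplement (doubleStarLaplacian (6 / 5) (6 / 5)) (Fin.castAdd 2) (Fin.addNat · 4) :=
    rfl
  rw [schurComplement_doubleStarLaplacian (by norm_num) (by norm_num)] at hS₂
  refine ⟨fun i => ?_, fun i => ?_, fun h => ?_⟩
  · rw [hS₁, if_pos rfl]
    norm_num
  · rw [hS₂]
    fin_cases i <;> norm_num
  · have h01 := congrFun (congrFun h 0) 1
    rw [hS₁, hS₂] at h01
    norm_num at h01
end
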